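/- arXiv:2404.19395 — 2 statements merged into one kernel-verified Lean document; each statement's English description precedes it below -/
import Mathlib

section
/- Let T and Q be non-zero polynomials in K[x,y], both divisible by x - y, such that T(x,y)·T(y,x) = Q(x,y)·Q(y,x). Then there exist polynomials φ, ψ ∈ K[x,y] with T(x,y) = φ(x,y)·ψ(x,y) and Q(x,y) = φ(x,y)·ψ(y,x). -/
/-!
Write `N a = a * σ a` for the involution `σ`; it is multiplicative and `σ`-invariant. Induct on
the prime factorisation of `T`: a prime `p ∣ T` divides `N T = N Q`, hence divides `Q` or `σ Q`,
so `p` or `σ p` can be cancelled from `Q` and `N p` from both sides. This gives `T = φ * ψ` and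
`Q = u * φ * σ ψ` with `N u = 1`. In `K[x,y]` units are constants, fixed by `σ`, so `u = ±1`, and
a sign is absorbed by the antisymmetric factor `x - y` common to `T` and `Q`.
-/

open MvPolynomial

/-- The automorphism of `K[x,y]` swapping the two variables. -/
noncomputable def s2 {K : Type*} [Field K] :
    MvPolynomial (Fin 2) K →ₐ[K] MvPolynomial (Fin 2) K :=
  rename (Equiv.swap 0 1)

section Involution

variable {R F : Type*} [CommMonoidWithZero R] [FunLike F R R] [MonoidWithZeroHomClass F R R]
  {σ : F}

theorem mul_map_mul_mul (x y : R) : x * y * σ (x * y) = x * σ x * (y * σ y) := by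
  rw [map_mul, mul_mul_mul_comm]

variable (hσ : Function.Involutive σ)
include hσ

theorem mul_map_eq_of_mul_left [IsCancelMulZero R] {p a b : R} (hp : p ≠ 0)
    (h : p * a * σ (p * a) = p * b * σ (p * b)) : a * σ a = b * σ b :=
  mul_left_cancel₀ (mul_ne_zero hp ((map_ne_zero_iff σ hσ.injective).mpr hp))
    (by rwa [mul_map_mul_mul, mul_map_mul_mul] at h)

theorem exists_eq_mul_and_eq_mul_mul_map_of_mul_map_eq [UniqueFactorizationMonoid R]
    {T Q : R} (h : T * σ T = Q * σ Q) :
    ∃ φ ψ u : R, u * σ u = 1 ∧ T = φ * ψ ∧ Q = u * φ * σ ψ := by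
  induction T using UniqueFactorizationMonoid.induction_on_prime generalizing Q with
  | h₁ =>
    have hQ : Q = 0 := by
      rcases mul_eq_zero.mp (h.symm.trans (zero_mul _)) with hQ | hQ
      exacts [hQ, (map_eq_zero_iff σ hσ.injective).mp hQ]
    exact ⟨0, 0, 1, by rw [map_one, one_mul], by rw [zero_mul], by rw [hQ, mul_zero, zero_mul]⟩
  | h₂ x hx =>
    obtain ⟨v, hv⟩ := (hx.map σ).exists_right_inv
    refine ⟨1, x, Q * v, ?_, (one_mul x).symm, ?_⟩
    · calc Q * v * σ (Q * v) = Q * σ Q * (v * σ v) := mul_map_mul_mul Q v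
        _ = σ x * v * σ (σ x * v) := by rw [← h, mul_map_mul_mul, hσ x, mul_comm x]
        _ = 1 := by rw [hv, map_one, one_mul]
    · rw [mul_one, mul_assoc, mul_comm v, hv, mul_one]
  | h₃ a p _ hp ih =>
    have hpQ : p ∣ Q * σ Q := h ▸ ⟨a * σ (p * a), by rw [mul_assoc]⟩
    rcases hp.dvd_or_dvd hpQ with ⟨Q', rfl⟩ | hpσQ
    · obtain ⟨φ, ψ, u, hu, rfl, rfl⟩ := ih (mul_map_eq_of_mul_left hσ hp.ne_zero h)
      exact ⟨p * φ, ψ, u, hu, (mul_assoc p φ ψ).symm, by rw [mul_left_comm u p, ← mul_assoc p]⟩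
    · obtain ⟨Q', rfl⟩ : σ p ∣ Q := hσ Q ▸ map_dvd σ hpσQ
      have hQ' : σ p * Q' * σ (σ p * Q') = p * Q' * σ (p * Q') := by
        rw [mul_map_mul_mul, mul_map_mul_mul, hσ p, mul_comm (σ p) p]
      obtain ⟨φ, ψ, u, hu, rfl, rfl⟩ := ih (mul_map_eq_of_mul_left hσ hp.ne_zero (h.trans hQ'))
      refine ⟨φ, p * ψ, u, hu, mul_left_comm p φ ψ, ?_⟩
      rw [map_mul, mul_left_comm (σ p)]

end Involution

theorem MvPolynomial.eq_one_or_eq_neg_one_of_mul_algHom_eq_one {ι K : Type*} [CommRing K]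
    [IsDomain K] (f : MvPolynomial ι K →ₐ[K] MvPolynomial ι K) {u : MvPolynomial ι K}
    (hu : u * f u = 1) : u = 1 ∨ u = -1 := by
  obtain ⟨r, -, rfl⟩ := isUnit_iff_eq_C_of_isReduced.mp (IsUnit.of_mul_eq_one _ hu)
  rw [← algebraMap_eq, AlgHom.commutes] at hu
  exact mul_self_eq_one_iff.mp hu

theorem s2_involutive {K : Type*} [Field K] :
    Function.Involutive (s2 : MvPolynomial (Fin 2) K → MvPolynomial (Fin 2) K) := by
  intro p
  simp [s2, rename_rename, Function.comp_def, ← Function.id_def]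

theorem s2_X_zero_sub_X_one {K : Type*} [Field K] :
    s2 (X 0 - X 1 : MvPolynomial (Fin 2) K) = -(X 0 - X 1) := by
  simp [s2]

theorem eq_sym_product_decomposition_general {K : Type*} [Field K]
    (T Q : MvPolynomial (Fin 2) K)
    (hdvdT : (X 0 - X 1) ∣ T) (hdvdQ : (X 0 - X 1) ∣ Q)
    (hprod : T * s2 T = Q * s2 Q) :
    ∃ φ ψ : MvPolynomial (Fin 2) K, T = φ * ψ ∧ Q = φ * s2 ψ := by
  obtain ⟨T₁, rfl⟩ := hdvdT
  obtain ⟨Q₁, rfl⟩ := hdvdQ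
  have hD : (X 0 - X 1 : MvPolynomial (Fin 2) K) ≠ 0 :=
    sub_ne_zero.mpr (X_injective.ne (by decide))
  obtain ⟨φ, ψ, u, hu, rfl, rfl⟩ := exists_eq_mul_and_eq_mul_mul_map_of_mul_map_eq
    s2_involutive (mul_map_eq_of_mul_left s2_involutive hD hprod)
  rcases eq_one_or_eq_neg_one_of_mul_algHom_eq_one s2 hu with rfl | rfl
  · exact ⟨(X 0 - X 1) * φ, ψ, by ring, by ring⟩
  · exact ⟨φ, (X 0 - X 1) * ψ, by ring, by rw [map_mul, s2_X_zero_sub_X_one]; ring⟩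

/-- If `T` and `Q` are non-zero polynomials in `K[x,y]`, both divisible by
`x - y`, with `T·sT = Q·sQ`, then there exist `φ, ψ` with `T = φ·ψ` and
`Q = φ·sψ`. -/
theorem eq_sym_product_decomposition {K : Type*} [Field K]
    (T Q : MvPolynomial (Fin 2) K)
    (hT : T ≠ 0) (hQ : Q ≠ 0)
    (hdvdT : (X 0 - X 1) ∣ T) (hdvdQ : (X 0 - X 1) ∣ Q)
    (hprod : T * s2 T = Q * s2 Q) :
    ∃ φ ψ : MvPolynomial (Fin 2) K, T = φ * ψ ∧ Q = φ * s2 ψ :=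
  eq_sym_product_decomposition_general T Q hdvdT hdvdQ hprod
end

section
/- Let π g = Q_0·∂g + R_0·g with Q_0 ≠ 0 on K[x,y], and let T = Q_0 + (x - y)·R_0. Then π² = μ·π + ν·Id for constants μ, ν ∈ K if and only if ∂T = μ and ∂(R_0·sT) + R_0·sR_0 = ν. -/
/-!
Writing `π f = Q₀ ∂f + R₀ f`, the Leibniz-type computation
`(x - y) π² f = (x - y) (∂T · π f + (∂(R₀ sT) + R₀ sR₀) · f)`, using only that `∂f` is symmetric,
shows that `π² = ∂T · π + (∂(R₀ sT) + R₀ sR₀) · Id` on all of `K[x,y]`. So `π² = μ π + ν Id`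
exactly when `(∂T - μ) · π + (∂(R₀ sT) + R₀ sR₀ - ν) · Id` vanishes, and evaluating this operator
at `f = (x - y)²` and at `f = x (x - y)` shows that both of its coefficients must be zero.
-/

open MvPolynomial

namespace MvPolynomial

theorem X_sub_X_ne_zero {σ R : Type*} [CommRing R] [Nontrivial R] {i j : σ} (hij : i ≠ j) :
    (X i - X j : MvPolynomial σ R) ≠ 0 :=
  sub_ne_zero.mpr (X_injective.ne hij)

theorem X_add_X_ne_zero {σ R : Type*} [CommSemiring R] [Nontrivial R] {i j : σ} (hij : i ≠ j) :
    (X i + X j : MvPolynomial σ R) ≠ 0 := by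
  classical
  intro h
  have := congrArg (eval (Pi.single i 1)) h
  simp [hij.symm] at this

end MvPolynomial

section DividedDifference

variable {K : Type*} [Field K]

@[simp]
theorem s2_s2 (p : MvPolynomial (Fin 2) K) : s2 (s2 p) = p := by
  simp only [s2, rename_rename, Function.comp_def, Equiv.swap_apply_self]
  exact rename_id_apply p

@[simp]
theorem s2_X_zero : s2 (X 0 : MvPolynomial (Fin 2) K) = X 1 := by
  simp [s2]

@[simp]
theorem s2_X_one : s2 (X 1 : MvPolynomial (Fin 2) K) = X 0 := by
  simp [s2]

/-- `D = ∂f`. -/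
def IsDividedDifference (f D : MvPolynomial (Fin 2) K) : Prop :=
  (X 0 - X 1) * D = f - s2 f

theorem IsDividedDifference.s2_eq_self {f D : MvPolynomial (Fin 2) K}
    (h : IsDividedDifference f D) : s2 D = D := by
  unfold IsDividedDifference at h
  have hs := congrArg s2 h
  simp only [map_mul, map_sub, s2_s2, s2_X_zero, s2_X_one] at hs
  have h0 : (X 0 - X 1) * (s2 D - D) = 0 := by linear_combination -hs - h
  exact sub_eq_zero.mp ((mul_eq_zero.mp h0).resolve_left (X_sub_X_ne_zero (by decide)))

variable {Q0 R0 DT DRsT : MvPolynomial (Fin 2) K}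

theorem pi_sq_eq (hDT : IsDividedDifference (Q0 + (X 0 - X 1) * R0) DT)
    (hDRsT : IsDividedDifference (R0 * s2 (Q0 + (X 0 - X 1) * R0)) DRsT)
    {f Df Dg : MvPolynomial (Fin 2) K} (hf : IsDividedDifference f Df)
    (hg : IsDividedDifference (Q0 * Df + R0 * f) Dg) :
    Q0 * Dg + R0 * (Q0 * Df + R0 * f)
      = DT * (Q0 * Df + R0 * f) + (DRsT + R0 * s2 R0) * f := by
  have hsDf := hf.s2_eq_self
  unfold IsDividedDifference at *
  simp only [map_add, map_mul, map_sub, s2_s2, s2_X_zero, s2_X_one, hsDf] at hDT hDRsT hg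
  apply mul_left_cancel₀ (X_sub_X_ne_zero (by decide : (0 : Fin 2) ≠ 1))
  linear_combination Q0 * hg - (Q0 * Df + R0 * f) * hDT - f * hDRsT - Q0 * s2 R0 * hf

/-- `hDT` is what provides `∂(π f)` for the test function `f = x (x - y)`. -/
theorem eq_zero_of_mul_pi_add_mul_eq_zero (hQ0 : Q0 ≠ 0)
    (hDT : IsDividedDifference (Q0 + (X 0 - X 1) * R0) DT) {A B : MvPolynomial (Fin 2) K}
    (H : ∀ f Df Dg, IsDividedDifference f Df → IsDividedDifference (Q0 * Df + R0 * f) Dg →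
      A * (Q0 * Df + R0 * f) + B * f = 0) :
    A = 0 ∧ B = 0 := by
  unfold IsDividedDifference at *
  have hsT := hDT
  simp only [map_add, map_mul, map_sub, s2_X_zero, s2_X_one] at hsT
  have hAB : A * R0 + B = 0 := by
    have := H ((X 0 - X 1) ^ 2) 0 ((X 0 - X 1) * (R0 - s2 R0))
      (by simp only [map_pow, map_sub, s2_X_zero, s2_X_one]; ring)
      (by simp only [map_add, map_mul, map_pow, map_sub, map_zero, s2_X_zero, s2_X_one]; ring)
    apply mul_left_cancel₀ (pow_ne_zero 2 (X_sub_X_ne_zero (by decide : (0 : Fin 2) ≠ 1)))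
    linear_combination this
  have hAQ0 : (X 0 + X 1) * (A * Q0) = 0 := by
    have := H (X 0 * (X 0 - X 1)) (X 0 + X 1) ((X 0 + X 1) * DT - X 1 * R0 - X 0 * s2 R0)
      (by simp only [map_mul, map_sub, s2_X_zero, s2_X_one]; ring)
      (by simp only [map_add, map_mul, map_sub, s2_X_zero, s2_X_one]
          linear_combination (X 0 + X 1) * hsT)
    linear_combination this - X 0 * (X 0 - X 1) * hAB
  have hA : A = 0 :=
    (mul_eq_zero.mp ((mul_eq_zero.mp hAQ0).resolve_left
      (X_add_X_ne_zero (by decide)))).resolve_right hQ0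
  exact ⟨hA, by simpa [hA] using hAB⟩

end DividedDifference

/-- Let `π g = Q_0·∂g + R_0·g` with `Q_0 ≠ 0`, and `T = Q_0 + (x - y)·R_0`.
Then `π² = μ·π + ν·Id` if and only if `∂T = μ` and
`∂(R_0·sT) + R_0·sR_0 = ν`. -/
theorem hecke_condition {K : Type*} [Field K]
    (Q0 R0 : MvPolynomial (Fin 2) K) (hQ0 : Q0 ≠ 0) (μ ν : K)
    (DT DRsT : MvPolynomial (Fin 2) K)
    (hDT : (X 0 - X 1) * DT
      = (Q0 + (X 0 - X 1) * R0) - s2 (Q0 + (X 0 - X 1) * R0))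
    (hDRsT : (X 0 - X 1) * DRsT
      = R0 * s2 (Q0 + (X 0 - X 1) * R0)
        - s2 (R0 * s2 (Q0 + (X 0 - X 1) * R0))) :
    (∀ f Df Dg : MvPolynomial (Fin 2) K,
        (X 0 - X 1) * Df = f - s2 f →
        (X 0 - X 1) * Dg = (Q0 * Df + R0 * f) - s2 (Q0 * Df + R0 * f) →
        Q0 * Dg + R0 * (Q0 * Df + R0 * f)
          = C μ * (Q0 * Df + R0 * f) + C ν * f)
      ↔ (DT = C μ ∧ DRsT + R0 * s2 R0 = C ν) := by
  constructor
  · intro H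
    have hcoeffs := eq_zero_of_mul_pi_add_mul_eq_zero (A := DT - C μ)
      (B := DRsT + R0 * s2 R0 - C ν) hQ0 hDT fun f Df Dg hf hg => by
        linear_combination H f Df Dg hf hg - pi_sq_eq hDT hDRsT hf hg
    exact ⟨sub_eq_zero.mp hcoeffs.1, sub_eq_zero.mp hcoeffs.2⟩
  · rintro ⟨hμ, hν⟩ f Df Dg hf hg
    rw [pi_sq_eq hDT hDRsT hf hg, hμ, hν]
end
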